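/- Let F : C → D and G : D → C be functors and ε : F∘G → 𝟭_D any natural transformation (no triangle identities assumed). Then for each n ≥ 0, any two natural transformations F(GF)ⁿ → F that are vertical composites of whiskered copies of ε are equal; in particular, for fixed n all ways of collapsing F(GF)ⁿ to F by applying ε to the n occurrences of FG in any order yield the same natural transformation. -/

import Mathlib

open CategoryTheory

namespace AdjRewrite

universe v₁ v₂ u₁ u₂
variable {C : Type u₁} [Category.{v₁} C] {D : Type u₂} [Category.{v₂} D]

/-- `powC F G n` is the alternating composite `(GF)ⁿ : C ⥤ C` (note `F ⋙ G` applies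
`F` first, so it is the classical `G∘F`). -/
def powC (F : C ⥤ D) (G : D ⥤ C) : ℕ → (C ⥤ C)
  | 0 => 𝟭 C
  | n + 1 => powC F G n ⋙ (F ⋙ G)

/-- `powD F G n` is the alternating composite `(FG)ⁿ : D ⥤ D`. -/
def powD (F : C ⥤ D) (G : D ⥤ C) : ℕ → (D ⥤ D)
  | 0 => 𝟭 D
  | n + 1 => powD F G n ⋙ (G ⋙ F)

/-- `aF F G n` is the alternating composite `F(GF)ⁿ : C ⥤ D`. -/
def aF (F : C ⥤ D) (G : D ⥤ C) (n : ℕ) : C ⥤ D := powC F G n ⋙ F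

/-- `aG F G n` is the alternating composite `G(FG)ⁿ : D ⥤ C`. -/
def aG (F : C ⥤ D) (G : D ⥤ C) (n : ℕ) : D ⥤ C := powD F G n ⋙ G

theorem powC_add (F : C ⥤ D) (G : D ⥤ C) (m n : ℕ) :
    powC F G (m + n) = powC F G m ⋙ powC F G n := by
  induction n with
  | zero =>
      show powC F G m = powC F G m ⋙ 𝟭 C
      rw [Functor.comp_id]
  | succ n ih =>
      show powC F G (m + n) ⋙ (F ⋙ G) = powC F G m ⋙ (powC F G n ⋙ (F ⋙ G))
      rw [ih, Functor.assoc]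

theorem powD_add (F : C ⥤ D) (G : D ⥤ C) (m n : ℕ) :
    powD F G (m + n) = powD F G m ⋙ powD F G n := by
  induction n with
  | zero =>
      show powD F G m = powD F G m ⋙ 𝟭 D
      rw [Functor.comp_id]
  | succ n ih =>
      show powD F G (m + n) ⋙ (G ⋙ F) = powD F G m ⋙ (powD F G n ⋙ (G ⋙ F))
      rw [ih, Functor.assoc]

theorem F_powD (F : C ⥤ D) (G : D ⥤ C) (n : ℕ) :
    F ⋙ powD F G n = powC F G n ⋙ F := by
  induction n with
  | zero =>
      show F ⋙ 𝟭 D = 𝟭 C ⋙ F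
      rw [Functor.comp_id, Functor.id_comp]
  | succ n ih =>
      show F ⋙ (powD F G n ⋙ (G ⋙ F)) = (powC F G n ⋙ (F ⋙ G)) ⋙ F
      rw [← Functor.assoc, ih]; rfl

theorem G_powC (F : C ⥤ D) (G : D ⥤ C) (n : ℕ) :
    G ⋙ powC F G n = powD F G n ⋙ G := by
  induction n with
  | zero =>
      show G ⋙ 𝟭 C = 𝟭 D ⋙ G
      rw [Functor.comp_id, Functor.id_comp]
  | succ n ih =>
      show G ⋙ (powC F G n ⋙ (F ⋙ G)) = (powD F G n ⋙ (G ⋙ F)) ⋙ G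
      rw [← Functor.assoc, ih]; rfl

theorem aF_eps_dom (F : C ⥤ D) (G : D ⥤ C) (i j : ℕ) :
    aF F G (i + j + 1) = aF F G j ⋙ (G ⋙ F) ⋙ powD F G i :=
  calc aF F G (i + j + 1) = powC F G (j + 1 + i) ⋙ F := by
        rw [aF, show i + j + 1 = j + 1 + i by omega]
    _ = (powC F G (j + 1) ⋙ powC F G i) ⋙ F := by rw [powC_add]
    _ = powC F G (j + 1) ⋙ (powC F G i ⋙ F) := rfl
    _ = powC F G (j + 1) ⋙ (F ⋙ powD F G i) := by rw [F_powD]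
    _ = aF F G j ⋙ (G ⋙ F) ⋙ powD F G i := rfl

theorem aF_eps_cod (F : C ⥤ D) (G : D ⥤ C) (i j : ℕ) :
    aF F G (i + j) = aF F G j ⋙ 𝟭 D ⋙ powD F G i :=
  calc aF F G (i + j) = powC F G (j + i) ⋙ F := by
        rw [aF, show i + j = j + i by omega]
    _ = (powC F G j ⋙ powC F G i) ⋙ F := by rw [powC_add]
    _ = powC F G j ⋙ (powC F G i ⋙ F) := rfl
    _ = powC F G j ⋙ (F ⋙ powD F G i) := by rw [F_powD]
    _ = aF F G j ⋙ 𝟭 D ⋙ powD F G i := by rw [Functor.id_comp]; rfl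

theorem aF_eta_dom (F : C ⥤ D) (G : D ⥤ C) (i j : ℕ) :
    aF F G (i + j) = powC F G j ⋙ 𝟭 C ⋙ aF F G i :=
  calc aF F G (i + j) = powC F G (j + i) ⋙ F := by
        rw [aF, show i + j = j + i by omega]
    _ = (powC F G j ⋙ powC F G i) ⋙ F := by rw [powC_add]
    _ = powC F G j ⋙ 𝟭 C ⋙ aF F G i := by rw [Functor.id_comp]; rfl

theorem aF_eta_cod (F : C ⥤ D) (G : D ⥤ C) (i j : ℕ) :
    aF F G (i + j + 1) = powC F G j ⋙ (F ⋙ G) ⋙ aF F G i :=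
  calc aF F G (i + j + 1) = powC F G (j + 1 + i) ⋙ F := by
        rw [aF, show i + j + 1 = j + 1 + i by omega]
    _ = (powC F G (j + 1) ⋙ powC F G i) ⋙ F := by rw [powC_add]
    _ = powC F G j ⋙ (F ⋙ G) ⋙ aF F G i := rfl

theorem aG_eps_dom (F : C ⥤ D) (G : D ⥤ C) (i j : ℕ) :
    aG F G (i + j + 1) = powD F G j ⋙ (G ⋙ F) ⋙ aG F G i :=
  calc aG F G (i + j + 1) = powD F G (j + 1 + i) ⋙ G := by
        rw [aG, show i + j + 1 = j + 1 + i by omega]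
    _ = (powD F G (j + 1) ⋙ powD F G i) ⋙ G := by rw [powD_add]
    _ = powD F G j ⋙ (G ⋙ F) ⋙ aG F G i := rfl

theorem aG_eps_cod (F : C ⥤ D) (G : D ⥤ C) (i j : ℕ) :
    aG F G (i + j) = powD F G j ⋙ 𝟭 D ⋙ aG F G i :=
  calc aG F G (i + j) = powD F G (j + i) ⋙ G := by
        rw [aG, show i + j = j + i by omega]
    _ = (powD F G j ⋙ powD F G i) ⋙ G := by rw [powD_add]
    _ = powD F G j ⋙ 𝟭 D ⋙ aG F G i := by rw [Functor.id_comp]; rfl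

theorem aG_eta_dom (F : C ⥤ D) (G : D ⥤ C) (i j : ℕ) :
    aG F G (i + j) = aG F G j ⋙ 𝟭 C ⋙ powC F G i :=
  calc aG F G (i + j) = powD F G (j + i) ⋙ G := by
        rw [aG, show i + j = j + i by omega]
    _ = (powD F G j ⋙ powD F G i) ⋙ G := by rw [powD_add]
    _ = powD F G j ⋙ (powD F G i ⋙ G) := rfl
    _ = powD F G j ⋙ (G ⋙ powC F G i) := by rw [G_powC]
    _ = aG F G j ⋙ 𝟭 C ⋙ powC F G i := by rw [Functor.id_comp]; rfl

theorem aG_eta_cod (F : C ⥤ D) (G : D ⥤ C) (i j : ℕ) :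
    aG F G (i + j + 1) = aG F G j ⋙ (F ⋙ G) ⋙ powC F G i :=
  calc aG F G (i + j + 1) = powD F G (j + 1 + i) ⋙ G := by
        rw [aG, show i + j + 1 = j + 1 + i by omega]
    _ = (powD F G (j + 1) ⋙ powD F G i) ⋙ G := by rw [powD_add]
    _ = powD F G (j + 1) ⋙ (powD F G i ⋙ G) := rfl
    _ = powD F G (j + 1) ⋙ (G ⋙ powC F G i) := by rw [G_powC]
    _ = aG F G j ⋙ (F ⋙ G) ⋙ powC F G i := rfl

/-- The whiskered rule `(FG)ⁱ ε (F(GF)ʲ) : F(GF)^{i+j+1} ⟶ F(GF)^{i+j}`, with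
components `(FG)ⁱ(ε_{F(GF)ʲ A})`. -/
def epsRuleF (F : C ⥤ D) (G : D ⥤ C) (ε : G ⋙ F ⟶ 𝟭 D) (i j : ℕ) :
    aF F G (i + j + 1) ⟶ aF F G (i + j) :=
  eqToHom (aF_eps_dom F G i j) ≫
    Functor.whiskerLeft (aF F G j) (Functor.whiskerRight ε (powD F G i)) ≫
      eqToHom (aF_eps_cod F G i j).symm

/-- The whiskered rule `(F(GF)ⁱ) η (GF)ʲ : F(GF)^{i+j} ⟶ F(GF)^{i+j+1}`, with
components `F(GF)ⁱ(η_{(GF)ʲ A})`. -/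
def etaRuleF (F : C ⥤ D) (G : D ⥤ C) (η : 𝟭 C ⟶ F ⋙ G) (i j : ℕ) :
    aF F G (i + j) ⟶ aF F G (i + j + 1) :=
  eqToHom (aF_eta_dom F G i j) ≫
    Functor.whiskerLeft (powC F G j) (Functor.whiskerRight η (aF F G i)) ≫
      eqToHom (aF_eta_cod F G i j).symm

/-- The whiskered rule `(G(FG)ⁱ) ε (FG)ʲ : G(FG)^{i+j+1} ⟶ G(FG)^{i+j}`, with
components `G(FG)ⁱ(ε_{(FG)ʲ A})`. -/
def epsRuleG (F : C ⥤ D) (G : D ⥤ C) (ε : G ⋙ F ⟶ 𝟭 D) (i j : ℕ) :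
    aG F G (i + j + 1) ⟶ aG F G (i + j) :=
  eqToHom (aG_eps_dom F G i j) ≫
    Functor.whiskerLeft (powD F G j) (Functor.whiskerRight ε (aG F G i)) ≫
      eqToHom (aG_eps_cod F G i j).symm

/-- The whiskered rule `(GF)ⁱ η (G(FG)ʲ) : G(FG)^{i+j} ⟶ G(FG)^{i+j+1}`, with
components `(GF)ⁱ(η_{G(FG)ʲ A})`. -/
def etaRuleG (F : C ⥤ D) (G : D ⥤ C) (η : 𝟭 C ⟶ F ⋙ G) (i j : ℕ) :
    aG F G (i + j) ⟶ aG F G (i + j + 1) :=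
  eqToHom (aG_eta_dom F G i j) ≫
    Functor.whiskerLeft (aG F G j) (Functor.whiskerRight η (powC F G i)) ≫
      eqToHom (aG_eta_cod F G i j).symm

/-- `(η,ε)`-derivations between the alternating composites `F(GF)ⁿ : C ⥤ D`:
the smallest class containing identities and all whiskered copies of `η` and `ε`
(by alternating composites, wherever the types match), closed under vertical
composition. -/
inductive DerivF (F : C ⥤ D) (G : D ⥤ C) (η : 𝟭 C ⟶ F ⋙ G) (ε : G ⋙ F ⟶ 𝟭 D) :
    ∀ {a b : ℕ}, (aF F G a ⟶ aF F G b) → Prop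
  | id (n : ℕ) : DerivF F G η ε (𝟙 (aF F G n))
  | eps_rule (i j : ℕ) : DerivF F G η ε (epsRuleF F G ε i j)
  | eta_rule (i j : ℕ) : DerivF F G η ε (etaRuleF F G η i j)
  | comp {a b c : ℕ} {f : aF F G a ⟶ aF F G b} {g : aF F G b ⟶ aF F G c} :
      DerivF F G η ε f → DerivF F G η ε g → DerivF F G η ε (f ≫ g)

/-- `(η,ε)`-derivations between the alternating composites `G(FG)ⁿ : D ⥤ C`. -/
inductive DerivG (F : C ⥤ D) (G : D ⥤ C) (η : 𝟭 C ⟶ F ⋙ G) (ε : G ⋙ F ⟶ 𝟭 D) :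
    ∀ {a b : ℕ}, (aG F G a ⟶ aG F G b) → Prop
  | id (n : ℕ) : DerivG F G η ε (𝟙 (aG F G n))
  | eps_rule (i j : ℕ) : DerivG F G η ε (epsRuleG F G ε i j)
  | eta_rule (i j : ℕ) : DerivG F G η ε (etaRuleG F G η i j)
  | comp {a b c : ℕ} {f : aG F G a ⟶ aG F G b} {g : aG F G b ⟶ aG F G c} :
      DerivG F G η ε f → DerivG F G η ε g → DerivG F G η ε (f ≫ g)


/-- `ε`-only derivations between the alternating composites `F(GF)ⁿ : C ⥤ D`:
the smallest class containing identities and all whiskered copies of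
`ε : FG ⟶ 𝟭_D` (by alternating composites, wherever the types match), closed
under vertical composition. -/
inductive EpsDerivF (F : C ⥤ D) (G : D ⥤ C) (ε : G ⋙ F ⟶ 𝟭 D) :
    ∀ {a b : ℕ}, (aF F G a ⟶ aF F G b) → Prop
  | id (n : ℕ) : EpsDerivF F G ε (𝟙 (aF F G n))
  | eps_rule (i j : ℕ) : EpsDerivF F G ε (epsRuleF F G ε i j)
  | comp {a b c : ℕ} {f : aF F G a ⟶ aF F G b} {g : aF F G b ⟶ aF F G c} :
      EpsDerivF F G ε f → EpsDerivF F G ε g → EpsDerivF F G ε (f ≫ g)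

/-!
Let `c n : F(GF)ⁿ ⟶ F` collapse the occurrences of `FG` from the innermost one outwards.
Two whiskered copies of `ε` acting on disjoint occurrences of `FG` commute, by naturality
of `ε`; by induction on the position of a redex, every single rule `r` therefore satisfies
`r ≫ c = c`, and so does every `ε`-derivation. Since `c 0 = 𝟙 F`, every `ε`-derivation
`F(GF)ⁿ ⟶ F` equals `c n`.
-/

section Collapse

variable (F : C ⥤ D) (G : D ⥤ C) (ε : G ⋙ F ⟶ 𝟭 D)

theorem powD_add_eq (i j : ℕ) : powD F G (i + j) = powD F G j ⋙ powD F G i := by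
  rw [Nat.add_comm, powD_add]

theorem epsRuleF_eq_whisker (i j : ℕ) {S : C ⥤ D} {T : D ⥤ D} (hS : aF F G j = S)
    (hT : powD F G i = T) :
    epsRuleF F G ε i j =
      eqToHom (by rw [← hS, ← hT]; exact aF_eps_dom F G i j) ≫
        Functor.whiskerLeft S (Functor.whiskerRight ε T) ≫
          eqToHom (by rw [← hS, ← hT]; exact (aF_eps_cod F G i j).symm) := by
  subst hS hT
  rfl

theorem epsRuleF_comm (i j : ℕ) :
    epsRuleF F G ε i (j + 1) ≫ epsRuleF F G ε (i + j) 0 =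
      epsRuleF F G ε (i + j + 1) 0 ≫ epsRuleF F G ε i j := by
  -- Split `F(GF)^{i+j+2}` as `F ⋙ GF ⋙ (FG)ʲ ⋙ GF ⋙ (FG)ⁱ`: the two redexes are the two `GF`.
  rw [epsRuleF_eq_whisker F G ε i (j + 1) (S := F ⋙ (G ⋙ F) ⋙ powD F G j)
      (aF_eps_dom F G j 0) rfl,
    epsRuleF_eq_whisker F G ε (i + j) 0 (S := F) rfl (powD_add_eq F G i j),
    epsRuleF_eq_whisker F G ε (i + j + 1) 0 (S := F)
      (T := powD F G j ⋙ (G ⋙ F) ⋙ powD F G i) rfl (powD_add_eq F G i (j + 1)),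
    epsRuleF_eq_whisker F G ε i j (F_powD F G j).symm rfl]
  ext A
  have hnat := ε.naturality ((powD F G j).map (ε.app (F.obj A)))
  simp only [Functor.comp_obj, Functor.comp_map, Functor.id_obj, Functor.id_map] at hnat
  simp only [NatTrans.comp_app, eqToHom_app, Functor.whiskerLeft_app, Functor.whiskerRight_app,
    Functor.comp_obj, Functor.comp_map, Functor.id_obj, Category.assoc, eqToHom_trans_assoc,
    eqToHom_refl, Category.id_comp, ← Functor.map_comp_assoc, hnat]

def epsCollapse : ∀ n : ℕ, aF F G n ⟶ aF F G 0
  | 0 => 𝟙 _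
  | n + 1 => epsRuleF F G ε n 0 ≫ epsCollapse n

theorem epsRuleF_comp_epsCollapse (i j : ℕ) :
    epsRuleF F G ε i j ≫ epsCollapse F G ε (i + j) = epsCollapse F G ε (i + j + 1) := by
  induction j generalizing i with
  | zero => rfl
  | succ j ih =>
    calc epsRuleF F G ε i (j + 1) ≫ epsRuleF F G ε (i + j) 0 ≫ epsCollapse F G ε (i + j)
        = epsRuleF F G ε (i + j + 1) 0 ≫ epsRuleF F G ε i j ≫ epsCollapse F G ε (i + j) := by
          rw [← Category.assoc, epsRuleF_comm, Category.assoc]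
      _ = epsCollapse F G ε (i + j + 2) := by rw [ih]; rfl

theorem EpsDerivF.comp_epsCollapse {a b : ℕ} {f : aF F G a ⟶ aF F G b}
    (hf : EpsDerivF F G ε f) : f ≫ epsCollapse F G ε b = epsCollapse F G ε a := by
  induction hf with
  | id n => exact Category.id_comp _
  | eps_rule i j => exact epsRuleF_comp_epsCollapse F G ε i j
  | comp _ _ ihf ihg => rw [Category.assoc, ihg, ihf]

end Collapse

/-- **All `ε`-only collapses of `F(GF)ⁿ` to `F` agree** (Kozen, "Natural
Transformations as Rewrite Rules and Monad Composition", proof of Theorem 4.6;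
a consequence of Lemma 3.4, since distinct `ε`-redexes are disjoint).

For any functors `F : C ⥤ D`, `G : D ⥤ C` and **any** natural transformation
`ε : FG ⟶ 𝟭_D` (no triangle identities assumed), any two natural transformations
`F(GF)ⁿ ⟶ F` that are vertical composites of whiskered copies of `ε` are equal;
in particular all ways of collapsing the `n` occurrences of `FG` in any order
yield the same natural transformation. -/
theorem epsDeriv_unique
    (F : C ⥤ D) (G : D ⥤ C) (ε : G ⋙ F ⟶ 𝟭 D) :
    ∀ n : ℕ, ∀ f g : aF F G n ⟶ aF F G 0,
      EpsDerivF F G ε f → EpsDerivF F G ε g → f = g := by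
  intro n f g hf hg
  calc f = f ≫ epsCollapse F G ε 0 := (Category.comp_id f).symm
    _ = g ≫ epsCollapse F G ε 0 := by rw [hf.comp_epsCollapse, hg.comp_epsCollapse]
    _ = g := Category.comp_id g

end AdjRewrite
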